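/- Second Simplex Pairing Lemma: Let X ⊆ ℝⁿ be finite and in general position, E ⊆ F ⊆ X, and let Q ⊆ X be a simplex such that a sphere including Q and excluding E exists, but no sphere includes Q and excludes F. Then there exists x ∈ F \ E such that (i) the smallest sphere including Q\{x} and excluding E equals the smallest sphere including Q∪{x} and excluding E, and (ii) neither Q\{x} nor Q∪{x} admits a sphere including it and excluding F. -/

import Mathlib

/-! Spheres form a convex family: for spheres `(z₀, s₀)`, `(z₁, s₁)` and `t ∈ [0, 1]` there
is a sphere whose power `dist z p ^ 2 - s` at every point `p` is the convex combination with
weights `1 - t`, `t` of the two powers, and whose squared radius is at most `(1 - t) s₀ + t s₁`.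

Let `(z, s)` be a smallest sphere including `Q` and excluding `E`, and suppose every `x ∈ F`
strictly inside it had a sphere including `Q \ {x}` and excluding `F`. Such an `x` cannot lie
outside `Q`, so it lies in `Q ∩ F`; interpolating between `(z, s)` and these spheres one point
at a time, each time putting the new point `x` on the sphere, gives a sphere including `Q` and
excluding `F`, a contradiction. The point `x` found is not in `E` since `(z, s)` excludes `E`,
and interpolation once more shows that a point strictly inside a smallest sphere can be removed
from or added to `Q` without changing it. -/

/-- A sphere with center `z` and squared radius `s ≥ 0` includes `Q`, excludes `E`, and has
minimal squared radius among all such spheres. -/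
def IsSmallestSphere {n : ℕ} (Q E : Finset (EuclideanSpace ℝ (Fin n)))
    (z : EuclideanSpace ℝ (Fin n)) (s : ℝ) : Prop :=
  0 ≤ s ∧ (∀ q ∈ Q, dist z q ^ 2 ≤ s) ∧ (∀ e ∈ E, s ≤ dist z e ^ 2) ∧
    ∀ (z' : EuclideanSpace ℝ (Fin n)) (s' : ℝ), 0 ≤ s' →
      (∀ q ∈ Q, dist z' q ^ 2 ≤ s') → (∀ e ∈ E, s' ≤ dist z' e ^ 2) → s ≤ s'

/-- Some sphere includes `Q` and excludes `E`. -/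
def SphereExists {n : ℕ} (Q E : Finset (EuclideanSpace ℝ (Fin n))) : Prop :=
  ∃ (z : EuclideanSpace ℝ (Fin n)) (s : ℝ), 0 ≤ s ∧
    (∀ q ∈ Q, dist z q ^ 2 ≤ s) ∧ ∀ e ∈ E, s ≤ dist z e ^ 2

/-- General position: any at most `n + 1` points of `X` are affinely independent, and no
point of `X` outside such a subset `Q` lies on the smallest circumsphere of `Q`. -/
def GenPos {n : ℕ} (X : Finset (EuclideanSpace ℝ (Fin n))) : Prop :=
  ∀ Q : Finset (EuclideanSpace ℝ (Fin n)), Q ⊆ X → Q.card ≤ n + 1 →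
    AffineIndependent ℝ (fun q : (Q : Set (EuclideanSpace ℝ (Fin n))) =>
      (q : EuclideanSpace ℝ (Fin n))) ∧
    ∀ (z : EuclideanSpace ℝ (Fin n)) (s : ℝ),
      z ∈ affineSpan ℝ (Q : Set (EuclideanSpace ℝ (Fin n))) →
      (∀ q ∈ Q, dist z q ^ 2 = s) → ∀ p ∈ X, p ∉ Q → dist z p ^ 2 ≠ s

open Finset

section Interpolation

variable {V : Type*} [NormedAddCommGroup V] [InnerProductSpace ℝ V]

theorem dist_sq_convexCombination_sub (z₀ z₁ p : V) (s₀ s₁ t : ℝ) :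
    dist ((1 - t) • z₀ + t • z₁) p ^ 2
        - ((1 - t) * s₀ + t * s₁ - t * (1 - t) * dist z₀ z₁ ^ 2)
      = (1 - t) * (dist z₀ p ^ 2 - s₀) + t * (dist z₁ p ^ 2 - s₁) := by
  have hp : (1 - t) • z₀ + t • z₁ - p = (1 - t) • (z₀ - p) + t • (z₁ - p) := by
    simp only [smul_sub, sub_smul, one_smul]; abel
  have hz : z₀ - z₁ = (z₀ - p) - (z₁ - p) := by abel
  simp only [dist_eq_norm, hp, hz, norm_add_sq_real, norm_sub_sq_real, norm_smul,
    real_inner_smul_left, real_inner_smul_right, Real.norm_eq_abs, mul_pow, sq_abs]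
  ring

theorem exists_mem_Icc_convexCombination_eq_zero {a b : ℝ} (ha : a ≤ 0) (hb : 0 ≤ b) :
    ∃ t ∈ Set.Icc (0 : ℝ) 1, (1 - t) * a + t * b = 0 := by
  simpa using intermediate_value_Icc zero_le_one (f := fun t : ℝ => (1 - t) * a + t * b)
    (by fun_prop) (show (0 : ℝ) ∈ Set.Icc _ _ by simp [ha, hb])

theorem exists_sphere_through_of_convexCombination {z₀ z₁ x : V} {s₀ s₁ : ℝ}
    (h₀ : dist z₀ x ^ 2 ≤ s₀) (h₁ : s₁ ≤ dist z₁ x ^ 2) :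
    ∃ t ∈ Set.Icc (0 : ℝ) 1, ∃ (z : V) (s : ℝ),
      s ≤ (1 - t) * s₀ + t * s₁ ∧ dist z x ^ 2 = s ∧
      ∀ p, dist z p ^ 2 - s
        = (1 - t) * (dist z₀ p ^ 2 - s₀) + t * (dist z₁ p ^ 2 - s₁) := by
  obtain ⟨t, ⟨ht0, ht1⟩, ht⟩ :=
    exists_mem_Icc_convexCombination_eq_zero (sub_nonpos.2 h₀) (sub_nonneg.2 h₁)
  refine ⟨t, ⟨ht0, ht1⟩, (1 - t) • z₀ + t • z₁,
    (1 - t) * s₀ + t * s₁ - t * (1 - t) * dist z₀ z₁ ^ 2, ?_, ?_,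
    fun p => dist_sq_convexCombination_sub z₀ z₁ p s₀ s₁ t⟩
  · have : 0 ≤ t * (1 - t) := mul_nonneg ht0 (sub_nonneg.2 ht1)
    nlinarith [sq_nonneg (dist z₀ z₁)]
  · linarith [dist_sq_convexCombination_sub z₀ z₁ x s₀ s₁ t]

end Interpolation

section Spheres

variable {n : ℕ}

local notation "Pt" => EuclideanSpace ℝ (Fin n)

theorem SphereExists.mono {Q Q' E E' : Finset Pt} (h : SphereExists Q E) (hQ : Q' ⊆ Q)
    (hE : E' ⊆ E) : SphereExists Q' E' :=
  let ⟨z, s, hs, hin, hex⟩ := h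
  ⟨z, s, hs, fun q hq => hin q (hQ hq), fun e he => hex e (hE he)⟩

theorem exists_isSmallestSphere {Q E : Finset Pt} (h : SphereExists Q E) :
    ∃ z s, IsSmallestSphere Q E z s := by
  rcases Q.eq_empty_or_nonempty with rfl | ⟨q₀, hq₀⟩
  · exact ⟨0, 0, le_rfl, by simp, fun e _ => sq_nonneg _, fun _ _ hs _ _ => hs⟩
  obtain ⟨z₀, s₀, hs₀, hin₀, hex₀⟩ := h
  let K : Set (Pt × ℝ) := {p | p.2 ≤ s₀ ∧ (∀ q ∈ Q, dist p.1 q ^ 2 ≤ p.2) ∧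
    ∀ e ∈ E, p.2 ≤ dist p.1 e ^ 2}
  have hclosed : IsClosed K := by
    simp only [K, Set.ofPred_and, Set.ofPred_forall]
    exact (isClosed_le continuous_snd continuous_const).inter <|
      (isClosed_biInter fun q _ => isClosed_le (by fun_prop) continuous_snd).inter
        (isClosed_biInter fun e _ => isClosed_le continuous_snd (by fun_prop))
  have hbounded : K ⊆ Metric.closedBall q₀ (√s₀) ×ˢ Set.Icc 0 s₀ := by
    rintro ⟨z, s⟩ ⟨hs, hin, -⟩
    have hq := hin q₀ hq₀
    exact ⟨Real.le_sqrt_of_sq_le (hq.trans hs), (sq_nonneg _).trans hq, hs⟩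
  obtain ⟨⟨z, s⟩, ⟨-, hin, hex⟩, hmin⟩ :=
    ((isCompact_closedBall q₀ _).prod isCompact_Icc |>.of_isClosed_subset hclosed hbounded)
      |>.exists_isMinOn ⟨(z₀, s₀), le_rfl, hin₀, hex₀⟩ continuous_snd.continuousOn
  refine ⟨z, s, (sq_nonneg _).trans (hin q₀ hq₀), hin, hex, fun z' s' _ hin' hex' => ?_⟩
  rcases le_or_gt s' s₀ with hs' | hs'
  · exact isMinOn_iff.1 hmin (z', s') ⟨hs', hin', hex'⟩
  · exact (isMinOn_iff.1 hmin (z₀, s₀) ⟨le_rfl, hin₀, hex₀⟩).trans hs'.le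

variable [DecidableEq (EuclideanSpace ℝ (Fin n))]

theorem IsSmallestSphere.insert {Q E : Finset Pt} {z x : Pt} {s : ℝ}
    (h : IsSmallestSphere Q E z s) (hx : dist z x ^ 2 ≤ s) :
    IsSmallestSphere (insert x Q) E z s := by
  obtain ⟨hs, hin, hex, hmin⟩ := h
  refine ⟨hs, fun q hq => ?_, hex, fun z' s' hs' hin' hex' =>
    hmin z' s' hs' (fun q hq => hin' q (mem_insert_of_mem hq)) hex'⟩
  rcases mem_insert.1 hq with rfl | hq
  exacts [hx, hin q hq]

theorem IsSmallestSphere.erase {Q E : Finset Pt} {z x : Pt} {s : ℝ}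
    (h : IsSmallestSphere Q E z s) (hx : dist z x ^ 2 < s) :
    IsSmallestSphere (Q.erase x) E z s := by
  obtain ⟨hs, hin, hex, hmin⟩ := h
  refine ⟨hs, fun q hq => hin q (mem_of_mem_erase hq), hex, fun z' s' hs' hin' hex' => ?_⟩
  by_contra! hlt
  have hx' : s' < dist z' x ^ 2 := by
    by_contra! hx'
    refine (hmin z' s' hs' (fun q hq => ?_) hex').not_gt hlt
    rcases eq_or_ne q x with rfl | hqx
    exacts [hx', hin' q (mem_erase.2 ⟨hqx, hq⟩)]
  -- Moving from `(z, s)` towards `(z', s')` until `x` lies on the sphere yields a competitor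
  -- for `Q` of squared radius below `s`.
  obtain ⟨t, ⟨ht0, ht1⟩, zt, st, hst, hxt, hpow⟩ :=
    exists_sphere_through_of_convexCombination hx.le hx'.le
  have ht : 0 < t := by
    by_contra! ht
    have := hpow x
    rw [le_antisymm ht ht0] at this
    linarith
  refine (hmin zt st (hxt ▸ sq_nonneg _) (fun q hq => ?_) (fun e he => ?_)).not_gt ?_
  · rcases eq_or_ne q x with rfl | hqx
    · exact hxt.le
    · nlinarith [hpow q, hin q hq, hin' q (mem_erase.2 ⟨hqx, hq⟩)]
  · nlinarith [hpow e, hex e he, hex' e he]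
  · nlinarith

theorem SphereExists.insert_of_erase {Q G : Finset Pt} {x : Pt} (hx : x ∈ Q)
    (h₀ : SphereExists Q G) (h₁ : SphereExists (Q.erase x) (insert x G)) :
    SphereExists Q (insert x G) := by
  obtain ⟨z₀, s₀, -, hin₀, hex₀⟩ := h₀
  obtain ⟨z₁, s₁, -, hin₁, hex₁⟩ := h₁
  obtain ⟨t, ⟨ht0, ht1⟩, z, s, -, hxz, hpow⟩ :=
    exists_sphere_through_of_convexCombination (hin₀ x hx) (hex₁ x (mem_insert_self x G))
  refine ⟨z, s, hxz ▸ sq_nonneg _, fun q hq => ?_, fun g hg => ?_⟩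
  · rcases eq_or_ne q x with rfl | hqx
    · exact hxz.le
    · nlinarith [hpow q, hin₀ q hq, hin₁ q (mem_erase.2 ⟨hqx, hq⟩)]
  · rcases mem_insert.1 hg with rfl | hg
    · exact hxz.ge
    · nlinarith [hpow g, hex₀ g hg, hex₁ g (mem_insert_of_mem hg)]

theorem SphereExists.union_of_forall_erase {Q G T : Finset Pt} (hTQ : T ⊆ Q)
    (hG : SphereExists Q G) (hT : ∀ x ∈ T, SphereExists (Q.erase x) (G ∪ T)) :
    SphereExists Q (G ∪ T) := by
  induction T using Finset.induction_on with
  | empty => simpa using hG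
  | insert x T _ ih =>
    have hxQ := hTQ (mem_insert_self x T)
    have hGT : SphereExists Q (G ∪ T) := ih (insert_subset_iff.1 hTQ).2 fun y hy =>
      (hT y (mem_insert_of_mem hy)).mono subset_rfl (union_subset_union_right (subset_insert x T))
    rw [union_insert] at hT ⊢
    exact hGT.insert_of_erase hxQ (hT x (mem_insert_self x _))

theorem exists_lt_not_sphereExists_erase {Q F : Finset Pt} {z : Pt} {s : ℝ} (hs : 0 ≤ s)
    (hQ : ∀ q ∈ Q, dist z q ^ 2 ≤ s) (hF : ¬SphereExists Q F) :
    ∃ x ∈ F, dist z x ^ 2 < s ∧ ¬SphereExists (Q.erase x) F := by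
  by_contra! h
  set S := F.filter (dist z · ^ 2 < s)
  have hSQ : S ⊆ Q := fun x hx => by
    by_contra hxQ
    obtain ⟨hxF, hxs⟩ := mem_filter.1 hx
    exact hF (erase_eq_of_notMem hxQ ▸ h x hxF hxs)
  have hFS : F \ S ∪ S = F := sdiff_union_of_subset (filter_subset _ _)
  refine hF (hFS ▸ SphereExists.union_of_forall_erase hSQ ⟨z, s, hs, hQ, fun g hg => ?_⟩ ?_)
  · exact not_lt.1 fun hgs => (mem_sdiff.1 hg).2 (mem_filter.2 ⟨(mem_sdiff.1 hg).1, hgs⟩)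
  · intro x hx
    rw [hFS]
    exact h x (mem_filter.1 hx).1 (mem_filter.1 hx).2

end Spheres

theorem second_simplex_pairing_lemma_general (n : ℕ)
    [DecidableEq (EuclideanSpace ℝ (Fin n))]
    (E F Q : Finset (EuclideanSpace ℝ (Fin n)))
    (hE : SphereExists Q E) (hF : ¬ SphereExists Q F) :
    ∃ x ∈ F \ E,
      (∃ (z : EuclideanSpace ℝ (Fin n)) (s : ℝ),
        IsSmallestSphere (Q.erase x) E z s ∧ IsSmallestSphere (insert x Q) E z s) ∧
      ¬ SphereExists (Q.erase x) F ∧ ¬ SphereExists (insert x Q) F := by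
  obtain ⟨z, s, hsmall⟩ := exists_isSmallestSphere hE
  obtain ⟨x, hxF, hxs, hxF'⟩ := exists_lt_not_sphereExists_erase hsmall.1 hsmall.2.1 hF
  have hxE : x ∉ E := fun hxE => (hsmall.2.2.1 x hxE).not_gt hxs
  exact ⟨x, mem_sdiff.2 ⟨hxF, hxE⟩, ⟨z, s, hsmall.erase hxs, hsmall.insert hxs.le⟩, hxF',
    fun h => hF (h.mono (subset_insert x Q) subset_rfl)⟩

/-- **Second Simplex Pairing Lemma.**
Let `X` be finite and in general position, `E ⊆ F ⊆ X`, and let `Q ⊆ X` admit a sphere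
including `Q` and excluding `E`, but no sphere including `Q` and excluding `F`.  Then
there is `x ∈ F \ E` such that (i) `Q \ {x}` and `Q ∪ {x}` have the same smallest sphere
excluding `E`, and (ii) neither `Q \ {x}` nor `Q ∪ {x}` admits a sphere including it and
excluding `F`. -/
theorem second_simplex_pairing_lemma (n : ℕ)
    [DecidableEq (EuclideanSpace ℝ (Fin n))]
    (X E F Q : Finset (EuclideanSpace ℝ (Fin n)))
    (hGP : GenPos X) (hEF : E ⊆ F) (hFX : F ⊆ X) (hQX : Q ⊆ X)
    (hE : SphereExists Q E) (hF : ¬ SphereExists Q F) :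
    ∃ x ∈ F \ E,
      (∃ (z : EuclideanSpace ℝ (Fin n)) (s : ℝ),
        IsSmallestSphere (Q.erase x) E z s ∧ IsSmallestSphere (insert x Q) E z s) ∧
      ¬ SphereExists (Q.erase x) F ∧ ¬ SphereExists (insert x Q) F :=
  second_simplex_pairing_lemma_general n E F Q hE hF
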